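/- Let G be a commutative group (written multiplicatively), g : G, and ι a finite index set of attributes. Suppose a, s : ι → ℤ satisfy a i + s i = K for every i, and a_U, s_U : ι → ℤ satisfy a_U i + s_U i = K for every i. Let σ : ι ≃ ι be a permutation, r, ω : ℤ, p : ι → G, I_r a finset of ι, Î_r := image of I_r under σ⁻¹, A := g^r, D := g^(r·ω), B'ᵢ := p(σ i) * g^(a(σ i)·r) * g^(s i·r), AK := (∑_{i ∈ I_r} a_U i) + ω, RK := ∑_{i ∈ I_r} s_U i. Then the ProxyDecrypt2 output satisfies (D * (∏_{i ∈ Î_r} B'ᵢ) * A^(−(AK + RK))) * (∏_{j ∈ I_r} g^(r·(s j))) * (∏_{i ∈ Î_r} g^(r·(s i)))⁻¹ = ∏_{j ∈ I_r} p j; that is, applying the decryption materials AM = {g^{r·s i}} to the partially decrypted ciphertext exactly cancels the blinding factor g^{r·(∑_{i∈Î_r} s i − ∑_{j∈I_r} s j)} and recovers the product of the receiver's message tuples. -/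

import Mathlib

/-!
Reindexing the extracted product along `σ` undoes the shuffle, so it equals
`∏ p j · g^(r ∑ a j) · g^(r ∑_{Î_r} s)`.
Since `a j + s j = aU j + sU j = K`, the exponents collected by `ProxyDecrypt1` leave only the
blinding factor `g^(r (∑_{Î_r} s - ∑_{I_r} s))`, which the decryption materials of
`ProxyDecrypt2` cancel exactly.
-/

open Finset

theorem Finset.prod_zpow_eq_zpow_sum {G ι : Type*} [CommGroup G] (g : G) (t : Finset ι)
    (f : ι → ℤ) : ∏ i ∈ t, g ^ f i = g ^ ∑ i ∈ t, f i := by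
  induction t using Finset.cons_induction with
  | empty => simp
  | cons i t hi ih => rw [prod_cons, sum_cons, ih, zpow_add]

theorem Finset.prod_image_symm_comp {M ι : Type*} [CommMonoid M] [DecidableEq ι]
    (σ : Equiv.Perm ι) (t : Finset ι) (f : ι → M) :
    ∏ i ∈ t.image σ.symm, f (σ i) = ∏ j ∈ t, f j := by
  rw [prod_image σ.symm.injective.injOn]
  simp only [Equiv.apply_symm_apply]

theorem Finset.sum_add_sum_eq_of_forall_add_eq {M ι : Type*} [AddCommMonoid M] (t : Finset ι)
    (a s aU sU : ι → M) (K : M) (hK : ∀ i, a i + s i = K) (hKU : ∀ i, aU i + sU i = K) :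
    ∑ i ∈ t, a i + ∑ i ∈ t, s i = ∑ i ∈ t, aU i + ∑ i ∈ t, sU i := by
  simp only [← sum_add_distrib, hK, hKU]

theorem proxyDecrypt1_eq {G ι : Type*} [CommGroup G] [DecidableEq ι] (g : G)
    (a s aU sU : ι → ℤ) (σ : Equiv.Perm ι) (r ω : ℤ) (p : ι → G) (Ir : Finset ι)
    (hsum : ∑ i ∈ Ir, a i + ∑ i ∈ Ir, s i = ∑ i ∈ Ir, aU i + ∑ i ∈ Ir, sU i) :
    g ^ (r * ω) * (∏ i ∈ Ir.image σ.symm, p (σ i) * g ^ (a (σ i) * r) * g ^ (s i * r)) *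
        (g ^ r) ^ (-((∑ i ∈ Ir, aU i) + ω + ∑ i ∈ Ir, sU i)) =
      (∏ j ∈ Ir, p j) * g ^ (r * (∑ i ∈ Ir.image σ.symm, s i - ∑ j ∈ Ir, s j)) := by
  have extract :
      ∏ i ∈ Ir.image σ.symm, p (σ i) * g ^ (a (σ i) * r) * g ^ (s i * r) =
        (∏ j ∈ Ir, p j) *
          g ^ ((∑ j ∈ Ir, a j) * r + (∑ i ∈ Ir.image σ.symm, s i) * r) := by
    rw [prod_mul_distrib, prod_mul_distrib, prod_image_symm_comp σ Ir p,
      prod_image_symm_comp σ Ir (fun j ↦ g ^ (a j * r)), prod_zpow_eq_zpow_sum,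
      prod_zpow_eq_zpow_sum, mul_assoc, ← zpow_add, sum_mul, sum_mul]
  rw [extract, ← zpow_mul, mul_left_comm, mul_assoc, ← zpow_add, ← zpow_add]
  congr 2
  linear_combination r * hsum

theorem eabehp_proxyDecrypt2_correctness_general
    {G : Type*} [CommGroup G] (g : G)
    {ι : Type*} [DecidableEq ι]
    (a s aU sU : ι → ℤ) (K : ℤ)
    (hK : ∀ i, a i + s i = K) (hKU : ∀ i, aU i + sU i = K)
    (σ : Equiv.Perm ι) (r ω : ℤ) (p : ι → G) (Ir : Finset ι)
    (Ihat : Finset ι) (hIhat : Ihat = Ir.image σ.symm)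
    (A D : G) (hA : A = g ^ r) (hD : D = g ^ (r * ω))
    (B' : ι → G)
    (hB' : ∀ i, B' i = p (σ i) * g ^ (a (σ i) * r) * g ^ (s i * r))
    (AK RK : ℤ)
    (hAK : AK = (∑ i ∈ Ir, aU i) + ω) (hRK : RK = ∑ i ∈ Ir, sU i) :
    (D * (∏ i ∈ Ihat, B' i) * A ^ (-(AK + RK))) *
        (∏ j ∈ Ir, g ^ (r * s j)) * (∏ i ∈ Ihat, g ^ (r * s i))⁻¹ =
      ∏ j ∈ Ir, p j := by
  subst hIhat hA hD hAK hRK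
  have hsum := sum_add_sum_eq_of_forall_add_eq Ir a s aU sU K hK hKU
  simp only [hB']
  rw [proxyDecrypt1_eq g a s aU sU σ r ω p Ir hsum, prod_zpow_eq_zpow_sum,
    prod_zpow_eq_zpow_sum, mul_assoc, mul_assoc, ← zpow_neg, ← zpow_add, ← zpow_add,
    ← mul_sum, ← mul_sum, mul_eq_left, ← zpow_zero g]
  congr 1
  ring

/-- Correctness identity of the `ProxyDecrypt2` algorithm of the EABEHP scheme:
applying the decryption materials `AM = {g ^ (r * s i)}` to the partially
decrypted ciphertext produced by `ProxyDecrypt1` exactly cancels the blinding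
factor and recovers the product of the receiver's message tuples. -/
theorem eabehp_proxyDecrypt2_correctness
    {G : Type*} [CommGroup G] (g : G)
    {ι : Type*} [Fintype ι] [DecidableEq ι]
    (a s aU sU : ι → ℤ) (K : ℤ)
    (hK : ∀ i, a i + s i = K) (hKU : ∀ i, aU i + sU i = K)
    (σ : Equiv.Perm ι) (r ω : ℤ) (p : ι → G) (Ir : Finset ι)
    (Ihat : Finset ι) (hIhat : Ihat = Ir.image σ.symm)
    (A D : G) (hA : A = g ^ r) (hD : D = g ^ (r * ω))
    (B' : ι → G)
    (hB' : ∀ i, B' i = p (σ i) * g ^ (a (σ i) * r) * g ^ (s i * r))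
    (AK RK : ℤ)
    (hAK : AK = (∑ i ∈ Ir, aU i) + ω) (hRK : RK = ∑ i ∈ Ir, sU i) :
    (D * (∏ i ∈ Ihat, B' i) * A ^ (-(AK + RK))) *
        (∏ j ∈ Ir, g ^ (r * s j)) * (∏ i ∈ Ihat, g ^ (r * s i))⁻¹ =
      ∏ j ∈ Ir, p j :=
  eabehp_proxyDecrypt2_correctness_general g a s aU sU K hK hKU σ r ω p Ir Ihat hIhat A D hA hD B'
    hB' AK RK hAK hRK
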